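/- arXiv:2203.02163 — 2 statements merged into one kernel-verified Lean document; each statement's English description precedes it below -/
import Mathlib

section
/- Let $\eta = c + i d \in \mathbb{C}$ with $|\eta| < 1$ and $|\eta|^2 > c$, and suppose $0 < \omega < \frac{4(|\eta|^2 - c)}{(1-c)^2 + d^2}$. Then $\left|\tfrac{1}{2}[(2-\omega)\eta + \omega]\right| < |\eta|$. -/
/-! The point `((2 - ω) η + ω) / 2` equals `η + t (1 - η)` with `t = ω / 2`, and
`‖η + t (1 - η)‖² = ‖η‖² - t (2 (‖η‖² - Re η) - t ‖1 - η‖²)`, so moving from `η` towards `1`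
shortens `η` exactly for `0 < t < 2 (‖η‖² - Re η) / ‖1 - η‖²`. -/

namespace Complex

lemma sq_norm_one_sub (z : ℂ) : ‖1 - z‖ ^ 2 = (1 - z.re) ^ 2 + z.im ^ 2 := by
  rw [Complex.sq_norm, normSq_apply]
  simp only [sub_re, one_re, sub_im, one_im]
  ring

lemma sq_norm_add_mul_one_sub (z : ℂ) (t : ℝ) :
    ‖z + t * (1 - z)‖ ^ 2 = ‖z‖ ^ 2 - t * (2 * (‖z‖ ^ 2 - z.re) - t * ‖1 - z‖ ^ 2) := by
  simp only [Complex.sq_norm, normSq_apply, add_re, add_im, mul_re, mul_im, sub_re,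
    sub_im, one_re, one_im, ofReal_re, ofReal_im]
  ring

lemma norm_add_mul_one_sub_lt_norm {z : ℂ} {t : ℝ} (ht : 0 < t)
    (h : t * ‖1 - z‖ ^ 2 < 2 * (‖z‖ ^ 2 - z.re)) : ‖z + t * (1 - z)‖ < ‖z‖ := by
  refine lt_of_pow_lt_pow_left₀ 2 (norm_nonneg z) ?_
  rw [sq_norm_add_mul_one_sub]
  have := mul_pos ht (sub_pos.2 h)
  linarith

end Complex

theorem stmt_12_general (η : ℂ) (ω : ℝ) (hω0 : 0 < ω)
    (hω : ω < 4 * (‖η‖ ^ 2 - η.re) / ((1 - η.re) ^ 2 + η.im ^ 2)) :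
    ‖(1 / 2 : ℂ) * (((2 - ω : ℝ) : ℂ) * η + ((ω : ℝ) : ℂ))‖ <
      ‖η‖ := by
  rw [← Complex.sq_norm_one_sub] at hω
  -- if `η = 1` the bound `hω` reads `ω < 0`, since division by zero gives zero
  have hden : 0 < ‖1 - η‖ ^ 2 := by
    refine (sq_nonneg _).lt_of_ne fun h0 => ?_
    rw [← h0, div_zero] at hω
    exact hω0.not_gt hω
  have hstep : ω / 2 * ‖1 - η‖ ^ 2 < 2 * (‖η‖ ^ 2 - η.re) := by
    rw [lt_div_iff₀ hden] at hω
    linarith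
  have hpoint : (1 / 2 : ℂ) * (((2 - ω : ℝ) : ℂ) * η + ((ω : ℝ) : ℂ)) =
      η + ((ω / 2 : ℝ) : ℂ) * (1 - η) := by
    push_cast
    ring
  rw [hpoint]
  exact Complex.norm_add_mul_one_sub_lt_norm (half_pos hω0) hstep

theorem stmt_12 (η : ℂ) (ω : ℝ) (h1 : ‖η‖ < 1)
    (h2 : η.re < ‖η‖ ^ 2) (hω0 : 0 < ω)
    (hω : ω < 4 * (‖η‖ ^ 2 - η.re) / ((1 - η.re) ^ 2 + η.im ^ 2)) :
    ‖(1 / 2 : ℂ) * (((2 - ω : ℝ) : ℂ) * η + ((ω : ℝ) : ℂ))‖ <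
      ‖η‖ :=
  stmt_12_general η ω hω0 hω
end

section
/- Let $\eta = c + i d \in \mathbb{C}$ with $|\eta|^2 \le c$ and let $0 < \omega < 2$. Then $|\eta| \le \left|\tfrac{1}{2}[(2-\omega)\eta + \omega]\right|$, and if moreover $|\eta| < 1$ then $\left|\tfrac{1}{2}[(2-\omega)\eta + \omega]\right| < 1$. -/
/-!
Put `t = ω / 2 ∈ (0, 1)`, so the point in question is the convex combination `ξ = (1 - t) η + t`
of `η` and `1`. Expanding,
`‖ξ‖² - ‖η‖² = 2t(1 - t)(Re η - ‖η‖²) + t²(1 - ‖η‖²)`,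
and both terms are nonnegative because `‖η‖² ≤ Re η ≤ ‖η‖` forces `‖η‖ ≤ 1`.
If `‖η‖ < 1`, the triangle inequality gives `‖ξ‖ ≤ (1 - t)‖η‖ + t < 1`.
-/

namespace Complex

theorem norm_le_one_of_sq_norm_le_re {η : ℂ} (h : ‖η‖ ^ 2 ≤ η.re) : ‖η‖ ≤ 1 := by
  have hre : η.re ≤ ‖η‖ := re_le_norm η
  nlinarith [norm_nonneg η]

theorem sq_norm_convexComb_one (η : ℂ) (t : ℝ) :
    ‖((1 - t : ℝ) : ℂ) * η + t‖ ^ 2 =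
      ‖η‖ ^ 2 + 2 * t * (1 - t) * (η.re - ‖η‖ ^ 2) + t ^ 2 * (1 - ‖η‖ ^ 2) := by
  simp only [Complex.sq_norm, normSq_apply, add_re, add_im, mul_re, mul_im, ofReal_re, ofReal_im]
  ring

theorem norm_le_norm_convexComb_one {η : ℂ} (h : ‖η‖ ^ 2 ≤ η.re) {t : ℝ} (ht0 : 0 ≤ t)
    (ht1 : t ≤ 1) : ‖η‖ ≤ ‖((1 - t : ℝ) : ℂ) * η + t‖ := by
  have hη : ‖η‖ ≤ 1 := norm_le_one_of_sq_norm_le_re h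
  have hsq : ‖η‖ ^ 2 ≤ ‖((1 - t : ℝ) : ℂ) * η + t‖ ^ 2 := by
    rw [sq_norm_convexComb_one]
    have h1t : 0 ≤ 1 - t := sub_nonneg.2 ht1
    have hgap : 0 ≤ η.re - ‖η‖ ^ 2 := sub_nonneg.2 h
    have hη' : 0 ≤ 1 - ‖η‖ ^ 2 := by nlinarith [norm_nonneg η]
    have : 0 ≤ 2 * t * (1 - t) * (η.re - ‖η‖ ^ 2) + t ^ 2 * (1 - ‖η‖ ^ 2) := by positivity
    linarith
  exact (pow_le_pow_iff_left₀ (norm_nonneg _) (norm_nonneg _) two_ne_zero).1 hsq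

theorem norm_convexComb_one_lt_one {η : ℂ} (hη : ‖η‖ < 1) {t : ℝ} (ht0 : 0 ≤ t)
    (ht1 : t < 1) : ‖((1 - t : ℝ) : ℂ) * η + t‖ < 1 :=
  calc ‖((1 - t : ℝ) : ℂ) * η + t‖
      ≤ (1 - t) * ‖η‖ + t := by
        refine (norm_add_le _ _).trans ?_
        rw [norm_mul, norm_real, norm_real, Real.norm_of_nonneg (by linarith),
          Real.norm_of_nonneg ht0]
    _ < 1 := by nlinarith

end Complex

theorem stmt_13 (η : ℂ) (ω : ℝ) (h : ‖η‖ ^ 2 ≤ η.re)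
    (hω0 : 0 < ω) (hω2 : ω < 2) :
    ‖η‖ ≤
        ‖(1 / 2 : ℂ) * (((2 - ω : ℝ) : ℂ) * η + ((ω : ℝ) : ℂ))‖ ∧
      (‖η‖ < 1 →
        ‖(1 / 2 : ℂ) * (((2 - ω : ℝ) : ℂ) * η + ((ω : ℝ) : ℂ))‖ < 1) := by
  have hξ : (1 / 2 : ℂ) * (((2 - ω : ℝ) : ℂ) * η + ((ω : ℝ) : ℂ)) =
      ((1 - ω / 2 : ℝ) : ℂ) * η + ((ω / 2 : ℝ) : ℂ) := by
    push_cast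
    ring
  rw [hξ]
  exact ⟨Complex.norm_le_norm_convexComb_one h (by linarith) (by linarith),
    fun hη => Complex.norm_convexComb_one_lt_one hη (by linarith) (by linarith)⟩
end
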